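/- Suppose that an edge xy in a connected, locally finite simple graph G is not contained in any cycle of length 3 or 4. Then κ(x,y) ≤ 1/d_x + 2/d_y − 1, where d_x and d_y are the degrees of x and y. -/

import Mathlib

open Filter Topology Classical
set_option linter.unusedSectionVars false

noncomputable section

namespace RicciFlatPaper

variable {V : Type*}

/-- Degree as the natural cardinality of the neighbor set. -/
def deg (G : SimpleGraph V) (x : V) : ℕ := (G.neighborSet x).ncard

/-- The probability measure `m_x^α`: mass `α` at `x`, mass `(1-α)/d_x` at each
neighbor of `x`, and `0` elsewhere. -/
def mass (G : SimpleGraph V) (α : ℝ) (x : V) : V → ℝ :=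
  fun v => if v = x then α else if G.Adj x v then (1 - α) / (deg G x) else 0

/-- `A` is a (finitely supported, nonnegative) coupling between `m₁` and `m₂`. -/
def IsCoupling (m₁ m₂ : V → ℝ) (A : V → V → ℝ) : Prop :=
  (∀ u v, 0 ≤ A u v) ∧
  (Function.support (fun p : V × V => A p.1 p.2)).Finite ∧
  (∀ u, ∑ᶠ v, A u v = m₁ u) ∧ (∀ v, ∑ᶠ u, A u v = m₂ v)

/-- The transportation (Wasserstein) distance between two distributions,
with respect to the graph distance of `G`. -/
def W (G : SimpleGraph V) (m₁ m₂ : V → ℝ) : ℝ :=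
  sInf {c | ∃ A : V → V → ℝ, IsCoupling m₁ m₂ A ∧
    c = ∑ᶠ p : V × V, A p.1 p.2 * (G.dist p.1 p.2 : ℝ)}

/-- `κ_α(x,y) = 1 - W(m_x^α, m_y^α)`. -/
def kappaAlpha (G : SimpleGraph V) (α : ℝ) (x y : V) : ℝ :=
  1 - W G (mass G α x) (mass G α y)

/-- Lin–Lu–Yau Ricci curvature `κ(x,y) = lim_{α→1} κ_α(x,y)/(1-α)`. -/
def ricci (G : SimpleGraph V) (x y : V) : ℝ :=
  limUnder (𝓝[<] (1 : ℝ)) (fun α => kappaAlpha G α x y / (1 - α))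

/-- A graph is Ricci-flat if the Ricci curvature vanishes on every edge. -/
def RicciFlat (G : SimpleGraph V) : Prop := ∀ x y : V, G.Adj x y → ricci G x y = 0

/-- The edge `xy` lies on a cycle of length `n`. -/
def EdgeInCycleOfLength (G : SimpleGraph V) (x y : V) (n : ℕ) : Prop :=
  ∃ (v : V) (c : G.Walk v v), c.IsCycle ∧ c.length = n ∧ s(x, y) ∈ c.edges

section Aux

open Function SimpleGraph

variable (G : SimpleGraph V) [G.LocallyFinite]

lemma deg_eq_card (x : V) : deg G x = (G.neighborFinset x).card := by
  rw [deg, neighborFinset_def, Set.ncard_eq_toFinset_card']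

lemma mass_support (α : ℝ) (x : V) :
    Function.support (mass G α x) ⊆ ↑(insert x (G.neighborFinset x)) := by
  intro v hv
  simp only [Function.mem_support, mass] at hv
  by_cases h1 : v = x
  · simp [h1]
  · by_cases h2 : G.Adj x v
    · simp [mem_neighborFinset, h2]
    · simp [h1, h2] at hv

lemma mass_support_finite (α : ℝ) (x : V) :
    (Function.support (mass G α x)).Finite :=
  Set.Finite.subset (insert x (G.neighborFinset x)).finite_toSet (mass_support G α x)

lemma mass_nonneg {α : ℝ} (h0 : 0 ≤ α) (h1 : α ≤ 1) (x v : V) : 0 ≤ mass G α x v := by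
  unfold mass
  split_ifs with hvx hadj
  · exact h0
  · exact div_nonneg (by linarith) (Nat.cast_nonneg _)
  · exact le_refl 0

lemma finsum_mass {α : ℝ} (x : V) (hx : deg G x ≠ 0) : ∑ᶠ v, mass G α x v = 1 := by
  rw [finsum_eq_sum_of_support_subset _ (mass_support G α x),
    Finset.sum_insert (G.notMem_neighborFinset_self x)]
  have hxx : mass G α x x = α := by simp [mass]
  have hval : ∀ u ∈ G.neighborFinset x, mass G α x u = (1 - α) / (deg G x : ℝ) := by
    intro u hu
    have h1 : G.Adj x u := (mem_neighborFinset _ _ _).1 hu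
    have h2 : u ≠ x := h1.ne'
    simp [mass, h1, h2]
  rw [hxx, Finset.sum_congr rfl hval, Finset.sum_const, ← deg_eq_card, nsmul_eq_mul]
  have hx' : (deg G x : ℝ) ≠ 0 := Nat.cast_ne_zero.2 hx
  field_simp
  ring

lemma exists_coupling {α : ℝ} (h0 : 0 ≤ α) (h1 : α ≤ 1) (x y : V)
    (hx : deg G x ≠ 0) (hy : deg G y ≠ 0) :
    ∃ A, IsCoupling (mass G α x) (mass G α y) A := by
  refine ⟨fun u v => mass G α x u * mass G α y v, fun u v =>
    mul_nonneg (mass_nonneg G h0 h1 x u) (mass_nonneg G h0 h1 y v), ?_, ?_, ?_⟩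
  · apply Set.Finite.subset
      ((insert x (G.neighborFinset x) ×ˢ insert y (G.neighborFinset y)).finite_toSet)
    rintro ⟨u, v⟩ h
    have h1 : mass G α x u ≠ 0 := fun h' => h (by simp [h'])
    have h2 : mass G α y v ≠ 0 := fun h' => h (by simp [h'])
    simp only [Finset.coe_product, Set.mem_prod]
    exact ⟨mass_support G α x h1, mass_support G α y h2⟩
  · intro u
    rw [← mul_finsum' _ _ (mass_support_finite G α y), finsum_mass G y hy, mul_one]
  · intro v
    rw [← finsum_mul' _ _ (mass_support_finite G α x), finsum_mass G x hx, one_mul]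

lemma cost_nonneg {A : V → V → ℝ} (hA : ∀ u v, 0 ≤ A u v) :
    0 ≤ ∑ᶠ p : V × V, A p.1 p.2 * (G.dist p.1 p.2 : ℝ) :=
  finsum_nonneg fun p => mul_nonneg (hA p.1 p.2) (Nat.cast_nonneg _)

lemma W_bddBelow (m₁ m₂ : V → ℝ) :
    BddBelow {c | ∃ A : V → V → ℝ, IsCoupling m₁ m₂ A ∧
      c = ∑ᶠ p : V × V, A p.1 p.2 * (G.dist p.1 p.2 : ℝ)} := by
  refine ⟨0, ?_⟩
  rintro c ⟨A, hA, rfl⟩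
  exact cost_nonneg G hA.1

lemma cost_ge (m₁ m₂ : V → ℝ)
    (s t : Finset V) (hs : Function.support m₁ ⊆ ↑s) (ht : Function.support m₂ ⊆ ↑t)
    (f : V → ℝ) (hf : ∀ u ∈ s, ∀ v ∈ t, f u - f v ≤ (G.dist u v : ℝ))
    (A : V → V → ℝ) (hA : IsCoupling m₁ m₂ A) :
    (∑ u ∈ s, f u * m₁ u) - (∑ v ∈ t, f v * m₂ v) ≤
      ∑ᶠ p : V × V, A p.1 p.2 * (G.dist p.1 p.2 : ℝ) := by
  obtain ⟨hA0, hAfin, hA1, hA2⟩ := hA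
  have hrowfin : ∀ u, (Function.support fun v => A u v).Finite := by
    intro u
    apply Set.Finite.subset (hAfin.image Prod.snd)
    intro v hv
    exact ⟨(u, v), hv, rfl⟩
  have hcolfin : ∀ v, (Function.support fun u => A u v).Finite := by
    intro v
    apply Set.Finite.subset (hAfin.image Prod.fst)
    intro u hu
    exact ⟨(u, v), hu, rfl⟩
  have hmem : ∀ u v, A u v ≠ 0 → u ∈ s ∧ v ∈ t := by
    intro u v h
    have hpos : 0 < A u v := lt_of_le_of_ne (hA0 u v) (Ne.symm h)
    constructor
    · apply hs
      have := single_le_finsum v (hrowfin u) (fun v' => hA0 u v')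
      rw [hA1 u] at this
      exact ne_of_gt (lt_of_lt_of_le hpos this)
    · apply ht
      have := single_le_finsum u (hcolfin v) (fun u' => hA0 u' v)
      rw [hA2 v] at this
      exact ne_of_gt (lt_of_lt_of_le hpos this)
  have hPsupp : Function.support (fun p : V × V => A p.1 p.2) ⊆ ↑(s ×ˢ t) := by
    rintro ⟨u, v⟩ h
    have := hmem u v h
    simp [Finset.mem_product, this.1, this.2]
  have hrow : ∀ u, (Function.support fun v => A u v) ⊆ ↑t := by
    intro u v hv; exact (hmem u v hv).2
  have hcol : ∀ v, (Function.support fun u => A u v) ⊆ ↑s := by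
    intro v u hu; exact (hmem u v hu).1
  have hPsupp2 : Function.support (fun p : V × V => A p.1 p.2 * (G.dist p.1 p.2 : ℝ)) ⊆
      ↑(s ×ˢ t) := by
    intro p hp
    apply hPsupp
    intro h0
    exact hp (by simp only [h0, zero_mul])
  rw [finsum_eq_sum_of_support_subset _ hPsupp2]
  have key : (∑ p ∈ s ×ˢ t, A p.1 p.2 * (f p.1 - f p.2)) ≤
      ∑ p ∈ s ×ˢ t, A p.1 p.2 * (G.dist p.1 p.2 : ℝ) := by
    apply Finset.sum_le_sum
    rintro ⟨u, v⟩ hp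
    rw [Finset.mem_product] at hp
    exact mul_le_mul_of_nonneg_left (hf u hp.1 v hp.2) (hA0 u v)
  refine le_trans ?_ key
  have hm1 : ∀ u, m₁ u = ∑ v ∈ t, A u v := by
    intro u
    rw [← hA1 u, finsum_eq_sum_of_support_subset _ (hrow u)]
  have hm2 : ∀ v, m₂ v = ∑ u ∈ s, A u v := by
    intro v
    rw [← hA2 v, finsum_eq_sum_of_support_subset _ (hcol v)]
  have expand : (∑ p ∈ s ×ˢ t, A p.1 p.2 * (f p.1 - f p.2)) =
      (∑ u ∈ s, f u * ∑ v ∈ t, A u v) - (∑ v ∈ t, f v * ∑ u ∈ s, A u v) := by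
    rw [Finset.sum_product]
    simp_rw [mul_sub, Finset.sum_sub_distrib]
    congr 1
    · apply Finset.sum_congr rfl
      intro u _
      rw [Finset.mul_sum]
      apply Finset.sum_congr rfl
      intro v _
      ring
    · rw [Finset.sum_comm]
      apply Finset.sum_congr rfl
      intro v _
      rw [Finset.mul_sum]
      apply Finset.sum_congr rfl
      intro u _
      ring
  rw [expand]
  apply le_of_eq
  congr 1
  · exact Finset.sum_congr rfl fun u _ => by rw [hm1 u]
  · exact Finset.sum_congr rfl fun v _ => by rw [hm2 v]

lemma edge_in_C3 {x y v : V} (h1 : G.Adj x v) (h2 : G.Adj v y) (hxy : G.Adj x y) :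
    EdgeInCycleOfLength G x y 3 := by
  have hxv : x ≠ v := h1.ne
  have hvy : v ≠ y := h2.ne
  have hxy' : x ≠ y := hxy.ne
  refine ⟨x, Walk.cons h1 (Walk.cons h2 (Walk.cons hxy.symm Walk.nil)), ?_, rfl, ?_⟩
  · simp [Walk.isCycle_def, Walk.isTrail_def, hxv, hvy, hxy', Ne.symm hxv, Ne.symm hvy,
      Ne.symm hxy', Sym2.eq_iff]
  · simp [Sym2.eq_swap]

lemma edge_in_C4 {x y u v : V} (h1 : G.Adj x u) (h2 : G.Adj u v) (h3 : G.Adj v y)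
    (hxy : G.Adj x y) (huy : u ≠ y) (hvx : v ≠ x) :
    EdgeInCycleOfLength G x y 4 := by
  have hxu : x ≠ u := h1.ne
  have huv : u ≠ v := h2.ne
  have hvy : v ≠ y := h3.ne
  have hxy' : x ≠ y := hxy.ne
  refine ⟨x, Walk.cons h1 (Walk.cons h2 (Walk.cons h3 (Walk.cons hxy.symm Walk.nil))),
    ?_, rfl, ?_⟩
  · simp [Walk.isCycle_def, Walk.isTrail_def, hxu, huv, hvy, hxy', huy, hvx,
      Ne.symm hxu, Ne.symm huv, Ne.symm hvy, Ne.symm hxy', Ne.symm huy, Ne.symm hvx,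
      Sym2.eq_iff]
  · simp [Sym2.eq_swap]

/-- The witness Lipschitz-type function used for the lower bound on `W`. -/
def fxy (G : SimpleGraph V) (x y : V) : V → ℝ := fun v =>
  if v = y then 0 else if v = x then 1 else if G.Adj x v then 1 else if G.Adj y v then -1 else 0

lemma fxy_val_y {x y : V} : fxy G x y y = 0 := by simp [fxy]

lemma fxy_val_x {x y : V} (h : x ≠ y) : fxy G x y x = 1 := by simp [fxy, h]

lemma fxy_val_nbrx {x y u : V} (h1 : G.Adj x u) (h2 : u ≠ y) : fxy G x y u = 1 := by
  simp [fxy, h1, h2, h1.ne']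

lemma fxy_val_nbry {x y v : V} (h1 : G.Adj y v) (h2 : v ≠ x) (h5 : ¬ G.Adj x v) :
    fxy G x y v = -1 := by
  simp [fxy, h1, h2, h5, h1.ne']

lemma deg_ne_zero {x y : V} (hxy : G.Adj x y) : deg G x ≠ 0 := by
  rw [deg_eq_card]
  exact Finset.card_ne_zero_of_mem ((mem_neighborFinset _ _ _).2 hxy)

lemma two_le_dist (hconn : G.Connected) {a b : V} (hne : a ≠ b) (hadj : ¬ G.Adj a b) :
    (2 : ℝ) ≤ (G.dist a b : ℝ) := by
  have h0 : G.dist a b ≠ 0 := (hconn.pos_dist_of_ne hne).ne'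
  have h1 : G.dist a b ≠ 1 := fun h => hadj (dist_eq_one_iff_adj.1 h)
  have : (2 : ℕ) ≤ G.dist a b := by omega
  exact_mod_cast this

lemma one_le_dist (hconn : G.Connected) {a b : V} (hne : a ≠ b) :
    (1 : ℝ) ≤ (G.dist a b : ℝ) := by
  have : (1 : ℕ) ≤ G.dist a b := hconn.pos_dist_of_ne hne
  exact_mod_cast this

lemma fxy_pair_bound (hconn : G.Connected) {x y : V} (hxy : G.Adj x y)
    (h3 : ¬ EdgeInCycleOfLength G x y 3) (h4 : ¬ EdgeInCycleOfLength G x y 4) :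
    ∀ u ∈ insert x (G.neighborFinset x), ∀ v ∈ insert y (G.neighborFinset y),
      fxy G x y u - fxy G x y v ≤ (G.dist u v : ℝ) := by
  have hxny : x ≠ y := hxy.ne
  -- the key consequences of no C3 / C4
  have hnoC3 : ∀ v : V, G.Adj y v → v ≠ x → ¬ G.Adj x v := by
    intro v hyv hvx hxv
    exact h3 (edge_in_C3 G hxv hyv.symm hxy)
  have hnoC4 : ∀ u v : V, G.Adj x u → u ≠ y → G.Adj y v → v ≠ x → ¬ G.Adj u v := by
    intro u v hxu huy hyv hvx huv
    exact h4 (edge_in_C4 G hxu huv hyv.symm hxy huy hvx)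
  have hdist0 : ∀ a b : V, (0 : ℝ) ≤ (G.dist a b : ℝ) := fun a b => Nat.cast_nonneg _
  intro u hu v hv
  have hval_v : ∀ w : V, w ∈ insert y (G.neighborFinset y) →
      (w = y ∧ fxy G x y w = 0) ∨ (w = x ∧ fxy G x y w = 1) ∨
      (w ≠ x ∧ G.Adj y w ∧ fxy G x y w = -1) := by
    intro w hw
    rcases Finset.mem_insert.1 hw with h | hw'
    · exact Or.inl ⟨h, by rw [h]; exact fxy_val_y G⟩
    · have hyw : G.Adj y w := (mem_neighborFinset _ _ _).1 hw'
      by_cases hwx : w = x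
      · exact Or.inr (Or.inl ⟨hwx, by rw [hwx]; exact fxy_val_x G hxny⟩)
      · exact Or.inr (Or.inr ⟨hwx, hyw, fxy_val_nbry G hyw hwx (hnoC3 w hyw hwx)⟩)
  have hval_u : (u = x ∧ fxy G x y u = 1) ∨ (u = y ∧ fxy G x y u = 0) ∨
      (u ≠ y ∧ G.Adj x u ∧ fxy G x y u = 1) := by
    rcases Finset.mem_insert.1 hu with h | hu'
    · exact Or.inl ⟨h, by rw [h]; exact fxy_val_x G hxny⟩
    · have hxu : G.Adj x u := (mem_neighborFinset _ _ _).1 hu'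
      by_cases huy : u = y
      · exact Or.inr (Or.inl ⟨huy, by rw [huy]; exact fxy_val_y G⟩)
      · exact Or.inr (Or.inr ⟨huy, hxu, fxy_val_nbrx G hxu huy⟩)
  rcases hval_u with ⟨hux, hfu⟩ | ⟨huy, hfu⟩ | ⟨huy, hxu, hfu⟩ <;>
    rcases hval_v v hv with ⟨hvy, hfv⟩ | ⟨hvx, hfv⟩ | ⟨hvx, hyv, hfv⟩ <;>
    rw [hfu, hfv]
  · -- u = x, v = y : 1 - 0 ≤ d
    rw [hux, hvy]
    have := one_le_dist G hconn hxny
    linarith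
  · -- u = x, v = x
    have := hdist0 u v
    linarith
  · -- u = x, v far : 2 ≤ d
    rw [hux]
    have h2d := two_le_dist G hconn (Ne.symm hvx) (hnoC3 v hyv hvx)
    linarith
  · -- u = y, v = y
    have := hdist0 u v
    linarith
  · -- u = y, v = x
    have := hdist0 u v
    linarith
  · -- u = y, v nbr of y : 1 ≤ d
    rw [huy]
    have := one_le_dist G hconn hyv.ne
    linarith
  · -- u nbr x, v = y : 1 ≤ d
    rw [hvy]
    have := one_le_dist G hconn huy
    linarith
  · -- u nbr x, v = x
    have := hdist0 u v
    linarith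
  · -- u nbr x, v far : 2 ≤ d
    have hune : u ≠ v := by
      intro h
      rw [← h] at hyv
      exact hnoC3 u hyv (fun hh => hvx (h ▸ hh)) hxu
    have h2d := two_le_dist G hconn hune (hnoC4 u v hxu huy hyv hvx)
    linarith

lemma kappa_ratio_le (hconn : G.Connected) {x y : V} (hxy : G.Adj x y)
    (h3 : ¬ EdgeInCycleOfLength G x y 3) (h4 : ¬ EdgeInCycleOfLength G x y 4)
    {α : ℝ} (h0 : 0 < α) (h1 : α < 1) :
    kappaAlpha G α x y / (1 - α) ≤ 1 / (deg G x : ℝ) + 2 / (deg G y : ℝ) - 1 := by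
  have hxny : x ≠ y := hxy.ne
  have hdx : (deg G x : ℝ) ≠ 0 := Nat.cast_ne_zero.2 (deg_ne_zero G hxy)
  have hdy : (deg G y : ℝ) ≠ 0 := Nat.cast_ne_zero.2 (deg_ne_zero G hxy.symm)
  set dx : ℝ := (deg G x : ℝ) with hdxdef
  set dy : ℝ := (deg G y : ℝ) with hdydef
  have hnoC3 : ∀ v : V, G.Adj y v → v ≠ x → ¬ G.Adj x v := by
    intro v hyv hvx hxv
    exact h3 (edge_in_C3 G hxv hyv.symm hxy)
  -- the two weighted sums
  have hS1 : ∑ u ∈ insert x (G.neighborFinset x), fxy G x y u * mass G α x u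
      = α + ((dx : ℝ) - 1) * ((1 - α) / dx) := by
    rw [Finset.sum_insert (G.notMem_neighborFinset_self x)]
    have hmassx : mass G α x x = α := by simp [mass]
    have hterm : ∀ u ∈ G.neighborFinset x,
        fxy G x y u * mass G α x u
          = (1 - α) / dx - (if u = y then (1 - α) / dx else 0) := by
      intro u hu
      have hxu : G.Adj x u := (mem_neighborFinset _ _ _).1 hu
      have hmassu : mass G α x u = (1 - α) / dx := by simp [mass, hxu, hxu.ne', hdxdef]
      by_cases huy : u = y
      · rw [huy] at hmassu ⊢
        rw [fxy_val_y, hmassu, if_pos rfl]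
        ring
      · rw [fxy_val_nbrx G hxu huy, hmassu, if_neg huy]
        ring
    rw [Finset.sum_congr rfl hterm, Finset.sum_sub_distrib, Finset.sum_const,
      Finset.sum_ite_eq' (G.neighborFinset x) y (fun _ => (1 - α) / dx),
      if_pos ((mem_neighborFinset _ _ _).2 hxy), hmassx, fxy_val_x G hxny,
      ← deg_eq_card, nsmul_eq_mul]
    rw [← hdxdef]
    ring
  have hS2 : ∑ v ∈ insert y (G.neighborFinset y), fxy G x y v * mass G α y v
      = (2 - dy) * ((1 - α) / dy) := by
    rw [Finset.sum_insert (G.notMem_neighborFinset_self y)]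
    have hterm : ∀ v ∈ G.neighborFinset y,
        fxy G x y v * mass G α y v
          = -((1 - α) / dy) + (if v = x then 2 * ((1 - α) / dy) else 0) := by
      intro v hv
      have hyv : G.Adj y v := (mem_neighborFinset _ _ _).1 hv
      have hmassv : mass G α y v = (1 - α) / dy := by simp [mass, hyv, hyv.ne', hdydef]
      by_cases hvx : v = x
      · rw [hvx] at hmassv ⊢
        rw [fxy_val_x G hxny, hmassv, if_pos rfl]
        ring
      · rw [fxy_val_nbry G hyv hvx (hnoC3 v hyv hvx), hmassv, if_neg hvx]
        ring
    rw [Finset.sum_congr rfl hterm, Finset.sum_add_distrib, Finset.sum_const,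
      Finset.sum_ite_eq' (G.neighborFinset y) x (fun _ => 2 * ((1 - α) / dy)),
      if_pos ((mem_neighborFinset _ _ _).2 hxy.symm), fxy_val_y, ← deg_eq_card,
      nsmul_eq_mul]
    rw [← hdydef]
    ring
  -- lower bound for the Wasserstein distance
  have hW : 1 - (1 - α) * (1 / dx + 2 / dy - 1) ≤ W G (mass G α x) (mass G α y) := by
    apply le_csInf
    · obtain ⟨A, hA⟩ := exists_coupling G h0.le h1.le x y (deg_ne_zero G hxy)
        (deg_ne_zero G hxy.symm)
      exact ⟨_, A, hA, rfl⟩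
    · rintro b ⟨A, hA, rfl⟩
      have hcg := cost_ge G (mass G α x) (mass G α y)
        (insert x (G.neighborFinset x)) (insert y (G.neighborFinset y))
        (mass_support G α x) (mass_support G α y) (fxy G x y)
        (fxy_pair_bound G hconn hxy h3 h4) A hA
      rw [hS1, hS2] at hcg
      refine le_trans (le_of_eq ?_) hcg
      field_simp
      ring
  have hk : kappaAlpha G α x y ≤ (1 - α) * (1 / dx + 2 / dy - 1) := by
    unfold kappaAlpha
    linarith
  rw [div_le_iff₀ (by linarith : (0:ℝ) < 1 - α)]
  linarith [hk]

lemma kappa_ratio_mono (hconn : G.Connected) {x y : V} (hxy : G.Adj x y)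
    {α β : ℝ} (h0 : 0 ≤ α) (hαβ : α ≤ β) (h1 : β < 1) :
    kappaAlpha G α x y / (1 - α) ≤ kappaAlpha G β x y / (1 - β) := by
  have hα1 : α < 1 := lt_of_le_of_lt hαβ h1
  have h1α : (0:ℝ) < 1 - α := by linarith
  have h1β : (0:ℝ) < 1 - β := by linarith
  set lam : ℝ := (β - α) / (1 - α) with hlam
  have hlam0 : 0 ≤ lam := div_nonneg (by linarith) (by linarith)
  have hlam1 : lam < 1 := by
    rw [hlam, div_lt_one h1α]
    linarith
  have h1lam : 1 - lam = (1 - β) / (1 - α) := by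
    rw [hlam]
    field_simp
    ring
  have h1lampos : 0 < 1 - lam := by rw [h1lam]; positivity
  have e1 : (1 - lam) * α + lam = β := by
    rw [hlam]
    field_simp
    ring
  have e2 : (1 - lam) * (1 - α) = 1 - β := by
    rw [h1lam]
    field_simp
  -- mass at parameter β is the convex combination of mass at α and the Dirac mass
  have hmix : ∀ z v : V, mass G β z v
      = (1 - lam) * mass G α z v + lam * (if v = z then 1 else 0) := by
    intro z v
    unfold mass
    by_cases h : v = z
    · rw [if_pos h, if_pos h, if_pos h]
      linarith [e1]
    · rw [if_neg h, if_neg h, if_neg h]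
      by_cases hadj : G.Adj z v
      · rw [if_pos hadj, if_pos hadj, mul_zero, add_zero, mul_div_assoc', e2]
      · rw [if_neg hadj, if_neg hadj]
        ring
  -- the Dirac coupling
  set B : V → V → ℝ := fun u v => (if u = x then (1:ℝ) else 0) * (if v = y then 1 else 0)
    with hB
  have hBsupp : Function.support (fun p : V × V => B p.1 p.2) ⊆ {((x : V), (y : V))} := by
    rintro ⟨u, v⟩ h
    simp only [hB, Function.mem_support, ne_eq, mul_eq_zero, not_or] at h
    have hu : u = x := by by_contra hc; exact h.1 (if_neg hc)
    have hv : v = y := by by_contra hc; exact h.2 (if_neg hc)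
    simp [hu, hv]
  have hBfin : (Function.support (fun p : V × V => B p.1 p.2)).Finite :=
    Set.Finite.subset (Set.finite_singleton _) hBsupp
  have hBrow : ∀ u, ∑ᶠ v, B u v = if u = x then (1:ℝ) else 0 := by
    intro u
    have : ∀ v : V, v ≠ y → B u v = 0 := by
      intro v hv
      simp [hB, hv]
    rw [finsum_eq_single _ y this]
    simp [hB]
  have hBcol : ∀ v, ∑ᶠ u, B u v = if v = y then (1:ℝ) else 0 := by
    intro v
    have : ∀ u : V, u ≠ x → B u v = 0 := by
      intro u hu
      simp [hB, hu]
    rw [finsum_eq_single _ x this]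
    simp [hB]
  have hBcost : ∑ᶠ p : V × V, B p.1 p.2 * (G.dist p.1 p.2 : ℝ) = 1 := by
    have : ∀ p : V × V, p ≠ (x, y) → B p.1 p.2 * (G.dist p.1 p.2 : ℝ) = 0 := by
      rintro ⟨u, v⟩ hp
      rcases (not_and_or.1 (fun h => hp (Prod.ext h.1 h.2))) with h | h
      · simp [hB, h]
      · simp [hB, h]
    rw [finsum_eq_single _ ((x : V), (y : V)) this]
    have : G.dist x y = 1 := dist_eq_one_iff_adj.2 hxy
    simp [hB, this]
  -- every coupling at level α yields one at level β
  have hstep : ∀ b ∈ {c | ∃ A : V → V → ℝ, IsCoupling (mass G α x) (mass G α y) A ∧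
      c = ∑ᶠ p : V × V, A p.1 p.2 * (G.dist p.1 p.2 : ℝ)},
      W G (mass G β x) (mass G β y) ≤ (1 - lam) * b + lam := by
    rintro b ⟨A, ⟨hA0, hAfin, hA1, hA2⟩, rfl⟩
    have hrowfinA : ∀ u, (Function.support fun v => A u v).Finite := by
      intro u
      apply Set.Finite.subset (hAfin.image Prod.snd)
      intro v hv
      exact ⟨(u, v), hv, rfl⟩
    have hcolfinA : ∀ v, (Function.support fun u => A u v).Finite := by
      intro v
      apply Set.Finite.subset (hAfin.image Prod.fst)
      intro u hu
      exact ⟨(u, v), hu, rfl⟩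
    set A' : V → V → ℝ := fun u v => (1 - lam) * A u v + lam * B u v with hA'
    have hA'fin : (Function.support (fun p : V × V => A' p.1 p.2)).Finite := by
      apply Set.Finite.subset (hAfin.union hBfin)
      rintro ⟨u, v⟩ h
      by_contra hc
      rw [Set.mem_union] at hc
      push_neg at hc
      have g1 : A u v = 0 := by
        by_contra hg; exact hc.1 hg
      have g2 : B u v = 0 := by
        by_contra hg; exact hc.2 hg
      exact h (by simp [hA', g1, g2])
    have hcoupling : IsCoupling (mass G β x) (mass G β y) A' := by
      refine ⟨?_, hA'fin, ?_, ?_⟩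
      · intro u v
        have hBnn : 0 ≤ B u v := by
          simp only [hB]
          positivity
        have := hA0 u v
        simp only [hA']
        nlinarith
      · intro u
        have hfin1 : (Function.support fun v => (1 - lam) * A u v).Finite :=
          Set.Finite.subset (hrowfinA u) (fun v hv => by
            simp only [Function.mem_support] at hv ⊢
            intro h; exact hv (by rw [h, mul_zero]))
        have hfin2 : (Function.support fun v => lam * B u v).Finite := by
          apply Set.Finite.subset (Set.finite_singleton y)
          intro v hv
          simp only [Function.mem_support] at hv
          simp only [Set.mem_singleton_iff]
          by_contra hc
          exact hv (by simp [hB, hc])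
        have : (∑ᶠ v, A' u v) = (∑ᶠ v, (1 - lam) * A u v) + ∑ᶠ v, lam * B u v :=
          finsum_add_distrib hfin1 hfin2
        rw [this, ← mul_finsum' _ _ (hrowfinA u), ← mul_finsum' _ _ (Set.Finite.subset
          (Set.finite_singleton y) (fun v hv => by
            simp only [Function.mem_support] at hv
            simp only [Set.mem_singleton_iff]
            by_contra hc
            exact hv (by simp [hB, hc]))), hA1, hBrow, hmix x u]
      · intro v
        have hfin1 : (Function.support fun u => (1 - lam) * A u v).Finite :=
          Set.Finite.subset (hcolfinA v) (fun u hu => by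
            simp only [Function.mem_support] at hu ⊢
            intro h; exact hu (by rw [h, mul_zero]))
        have : (∑ᶠ u, A' u v) = (∑ᶠ u, (1 - lam) * A u v) + ∑ᶠ u, lam * B u v :=
          finsum_add_distrib hfin1 (Set.Finite.subset (Set.finite_singleton x)
            (fun u hu => by
              simp only [Function.mem_support] at hu
              simp only [Set.mem_singleton_iff]
              by_contra hc
              exact hu (by simp [hB, hc])))
        rw [this, ← mul_finsum' _ _ (hcolfinA v), ← mul_finsum' _ _ (Set.Finite.subset
          (Set.finite_singleton x) (fun u hu => by
            simp only [Function.mem_support] at hu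
            simp only [Set.mem_singleton_iff]
            by_contra hc
            exact hu (by simp [hB, hc]))), hA2, hBcol, hmix y v]
    have hcost : ∑ᶠ p : V × V, A' p.1 p.2 * (G.dist p.1 p.2 : ℝ)
        = (1 - lam) * (∑ᶠ p : V × V, A p.1 p.2 * (G.dist p.1 p.2 : ℝ)) + lam := by
      have hfin1 : (Function.support fun p : V × V =>
          (1 - lam) * A p.1 p.2 * (G.dist p.1 p.2 : ℝ)).Finite :=
        Set.Finite.subset hAfin (fun p hp => by
          simp only [Function.mem_support] at hp ⊢
          intro h; exact hp (by rw [h]; ring))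
      have hfin2 : (Function.support fun p : V × V =>
          lam * B p.1 p.2 * (G.dist p.1 p.2 : ℝ)).Finite :=
        Set.Finite.subset hBfin (fun p hp => by
          simp only [Function.mem_support] at hp ⊢
          intro h; exact hp (by rw [h]; ring))
      have expand : ∀ p : V × V, A' p.1 p.2 * (G.dist p.1 p.2 : ℝ)
          = (1 - lam) * A p.1 p.2 * (G.dist p.1 p.2 : ℝ)
            + lam * B p.1 p.2 * (G.dist p.1 p.2 : ℝ) := by
        intro p
        simp only [hA']
        ring
      rw [finsum_congr expand, finsum_add_distrib hfin1 hfin2]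
      congr 1
      · have hre : (fun p : V × V => (1 - lam) * A p.1 p.2 * (G.dist p.1 p.2 : ℝ))
            = fun p : V × V => (1 - lam) * (A p.1 p.2 * (G.dist p.1 p.2 : ℝ)) := by
          funext p; ring
        rw [hre, ← mul_finsum' _ _ (Set.Finite.subset hAfin (fun p hp => by
          simp only [Function.mem_support] at hp ⊢
          intro h; exact hp (by rw [h, zero_mul])))]
      · have : (fun p : V × V => lam * B p.1 p.2 * (G.dist p.1 p.2 : ℝ))
            = fun p : V × V => lam * (B p.1 p.2 * (G.dist p.1 p.2 : ℝ)) := by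
          funext p; ring
        rw [this, ← mul_finsum' _ _ (Set.Finite.subset hBfin (fun p hp => by
          simp only [Function.mem_support] at hp ⊢
          intro h; exact hp (by rw [h, zero_mul]))), hBcost, mul_one]
    have := csInf_le (W_bddBelow G (mass G β x) (mass G β y))
      (Set.mem_setOf.2 ⟨A', hcoupling, rfl⟩)
    rw [hcost] at this
    exact this
  -- conclude:  W_β ≤ (1-λ) W_α + λ
  have hne : {c | ∃ A : V → V → ℝ, IsCoupling (mass G α x) (mass G α y) A ∧
      c = ∑ᶠ p : V × V, A p.1 p.2 * (G.dist p.1 p.2 : ℝ)}.Nonempty := by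
    obtain ⟨A, hA⟩ := exists_coupling G h0 hα1.le x y (deg_ne_zero G hxy)
      (deg_ne_zero G hxy.symm)
    exact ⟨_, A, hA, rfl⟩
  have hWW : W G (mass G β x) (mass G β y)
      ≤ (1 - lam) * W G (mass G α x) (mass G α y) + lam := by
    have h2 : (W G (mass G β x) (mass G β y) - lam) / (1 - lam)
        ≤ W G (mass G α x) (mass G α y) := by
      apply le_csInf hne
      intro b hb
      rw [div_le_iff₀ h1lampos]
      nlinarith [hstep b hb]
    rw [div_le_iff₀ h1lampos] at h2
    nlinarith [h2]
  -- translate to the κ ratio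
  have hkk : (1 - lam) * kappaAlpha G α x y ≤ kappaAlpha G β x y := by
    unfold kappaAlpha
    nlinarith [hWW]
  rw [div_le_div_iff₀ h1α h1β]
  have : kappaAlpha G α x y * (1 - β) = ((1 - lam) * kappaAlpha G α x y) * (1 - α) := by
    rw [h1lam]
    field_simp
  rw [this]
  have h1ann : (0:ℝ) ≤ 1 - α := h1α.le
  nlinarith [hkk, h1α]

end Aux

/-- If an edge `xy` is not contained in any cycle of length
3 or 4, then `κ(x,y) ≤ 1/d_x + 2/d_y - 1`. -/
theorem ricci_le_of_no_C3_C4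
    {V : Type*} (G : SimpleGraph V) [G.LocallyFinite] (hconn : G.Connected)
    {x y : V} (hxy : G.Adj x y)
    (h3 : ¬ EdgeInCycleOfLength G x y 3)
    (h4 : ¬ EdgeInCycleOfLength G x y 4) :
    ricci G x y ≤ 1 / (deg G x : ℝ) + 2 / (deg G y : ℝ) - 1 := by
  classical
  set c : ℝ := 1 / (deg G x : ℝ) + 2 / (deg G y : ℝ) - 1 with hc
  set g : ℝ → ℝ := fun α => kappaAlpha G α x y / (1 - α) with hg
  have hub : ∀ α ∈ Set.Ioo (0:ℝ) 1, g α ≤ c := fun α hα =>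
    kappa_ratio_le G hconn hxy h3 h4 hα.1 hα.2
  have hmono : ∀ α ∈ Set.Ioo (0:ℝ) 1, ∀ β ∈ Set.Ioo (0:ℝ) 1, α ≤ β → g α ≤ g β :=
    fun α hα β hβ hab => kappa_ratio_mono G hconn hxy hα.1.le hab hβ.2
  have hne : (g '' Set.Ioo 0 1).Nonempty :=
    ⟨g (1/2), ⟨1/2, by norm_num, rfl⟩⟩
  have hbdd : BddAbove (g '' Set.Ioo 0 1) := by
    refine ⟨c, ?_⟩
    rintro _ ⟨a, ha, rfl⟩
    exact hub a ha
  set L := sSup (g '' Set.Ioo 0 1) with hL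
  have hLc : L ≤ c := by
    apply csSup_le hne
    rintro _ ⟨a, ha, rfl⟩
    exact hub a ha
  have htend : Filter.Tendsto g (nhdsWithin 1 (Set.Iio 1)) (nhds L) := by
    rw [Metric.tendsto_nhdsWithin_nhds]
    intro ε hε
    obtain ⟨z, hz, hzval⟩ : ∃ a ∈ Set.Ioo (0:ℝ) 1, L - ε < g a := by
      obtain ⟨w, hw, hwlt⟩ := exists_lt_of_lt_csSup hne (by linarith : L - ε < L)
      obtain ⟨a, ha, rfl⟩ := hw
      exact ⟨a, ha, hwlt⟩
    refine ⟨min (1 - z) (1/2), lt_min (by linarith [hz.2]) (by norm_num), ?_⟩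
    intro a ha hdist
    have h1 : a < 1 := ha
    rw [Real.dist_eq, abs_of_neg (by linarith : a - 1 < 0)] at hdist
    have hm1 := min_le_left (1 - z) (1/2)
    have hm2 := min_le_right (1 - z) (1/2)
    have haz : z ≤ a := by linarith
    have ha0 : 0 < a := by linarith
    have hga : g a ≤ L := le_csSup hbdd ⟨a, ⟨ha0, h1⟩, rfl⟩
    have hga2 : L - ε < g a := lt_of_lt_of_le hzval (hmono z hz a ⟨ha0, h1⟩ haz)
    rw [Real.dist_eq, abs_of_nonpos (by linarith : g a - L ≤ 0)]
    linarith
  have hricci : ricci G x y = L := htend.limUnder_eq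
  rw [hricci]
  exact hLc

end RicciFlatPaper

end
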